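/- arXiv:2504.17381 — 4 statements merged into one kernel-verified Lean document; each statement's English description precedes it below -/
import Mathlib

section
/- For every 0 < ε ≤ 1/5 there exists a convex polytope D in ℝ³ with O(ε⁻²) vertices such that the closed unit ball B₁(0) ⊆ D ⊆ B_{1+4ε}(0). -/
/-!
Push the points of the grid `{-1, -1 + 2/n, …, 1}³` radially onto the sphere of radius `1 + 3ε`.
With `n ≈ 2/√ε`, every unit vector `u` lies within `√(3ε)` of one of the normalized grid
points `w`, so `⟪u, (1 + 3ε) w⟫ ≥ (1 + 3ε)(1 - 3ε/2) ≥ 1`. As this holds in every direction `u`,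
no point of the unit ball can be separated from the hull of these `(n + 1)³ = O(ε^(-3/2))`
points.
-/

open Metric Finset NormedSpace InnerProductSpace
open scoped RealInnerProductSpace

section InnerProduct

variable {F : Type*} [NormedAddCommGroup F] [InnerProductSpace ℝ F]

theorem closedBall_subset_convexHull_of_forall_le_inner [CompleteSpace F] [Nontrivial F]
    {s : Finset F} {r : ℝ} (h : ∀ u : F, ‖u‖ = 1 → ∃ v ∈ s, r ≤ ⟪u, v⟫) :
    closedBall 0 r ⊆ convexHull ℝ (s : Set F) := by
  intro x hx
  by_contra hxs
  obtain ⟨f, t, hf_hull, hf_x⟩ := geometric_hahn_banach_closed_point (convex_convexHull ℝ _)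
    (s.finite_toSet.isCompact_convexHull ℝ).isClosed hxs
  set w := (toDual ℝ F).symm f
  have hf : ∀ y, f y = ⟪w, y⟫ := fun y => toDual_symm_apply.symm
  obtain ⟨v, hvs, hv⟩ : ∃ v ∈ s, r * ‖w‖ ≤ f v := by
    rcases eq_or_ne w 0 with hw | hw
    · obtain ⟨u, hu⟩ := exists_norm_eq F zero_le_one
      obtain ⟨v, hvs, -⟩ := h u hu
      exact ⟨v, hvs, by simp [hf, hw]⟩
    · obtain ⟨v, hvs, hv⟩ := h (normalize w) (norm_normalize hw)
      refine ⟨v, hvs, ?_⟩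
      have hfv : f v = ‖w‖ * ⟪normalize w, v⟫ := by
        rw [hf, ← real_inner_smul_left, norm_smul_normalize]
      rw [hfv, mul_comm]
      exact mul_le_mul_of_nonneg_left hv (norm_nonneg w)
  have hfx : f x ≤ r * ‖w‖ := calc
    f x = ⟪w, x⟫ := hf x
    _ ≤ ‖w‖ * ‖x‖ := real_inner_le_norm w x
    _ ≤ r * ‖w‖ := by rw [mul_comm]; gcongr; exact mem_closedBall_zero_iff.mp hx
  linarith [hf_hull v (subset_convexHull ℝ _ hvs)]

theorem one_le_inner_smul_of_norm_sub_sq_le {u w : F} {ε : ℝ} (hu : ‖u‖ = 1) (hw : ‖w‖ = 1)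
    (huw : ‖u - w‖ ^ 2 ≤ 3 * ε) (hε : ε ≤ 1 / 3) : 1 ≤ ⟪u, (1 + 3 * ε) • w⟫ := by
  have hinner : 1 - 3 / 2 * ε ≤ ⟪u, w⟫ := by
    have := norm_sub_sq_real u w
    rw [hu, hw] at this
    linarith
  rw [real_inner_smul_right]
  nlinarith [norm_nonneg (u - w)]

end InnerProduct

theorem norm_sub_normalize_le {V : Type*} [NormedAddCommGroup V] [NormedSpace ℝ V] {x y : V}
    (hx : ‖x‖ = 1) : ‖x - normalize y‖ ≤ 2 * ‖x - y‖ := by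
  have hy : ‖y - normalize y‖ ≤ ‖x - y‖ := by
    rcases eq_or_ne y 0 with rfl | hy
    · simp
    have hsub : (‖y‖ - ‖x‖) • normalize y = y - normalize y := by
      rw [hx, sub_smul, one_smul, norm_smul_normalize]
    calc ‖y - normalize y‖ = |‖y‖ - ‖x‖| := by
          rw [← hsub, norm_smul, norm_normalize hy, hx, mul_one, Real.norm_eq_abs]
      _ ≤ ‖x - y‖ := by rw [abs_sub_comm]; exact abs_norm_sub_norm_le x y
  calc ‖x - normalize y‖ ≤ ‖x - y‖ + ‖y - normalize y‖ := norm_sub_le_norm_sub_add_norm_sub _ _ _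
    _ ≤ 2 * ‖x - y‖ := by linarith

theorem EuclideanSpace.norm_le_sqrt_mul_of_forall_abs_le {d : ℕ} {x : EuclideanSpace ℝ (Fin d)}
    {δ : ℝ} (hδ : 0 ≤ δ) (hx : ∀ i, |x i| ≤ δ) : ‖x‖ ≤ √d * δ := by
  rw [EuclideanSpace.norm_eq, ← Real.sqrt_sq hδ, ← Real.sqrt_mul (Nat.cast_nonneg d)]
  gcongr
  calc ∑ i, ‖x i‖ ^ 2 ≤ ∑ _i : Fin d, δ ^ 2 := by
        gcongr with i; rw [Real.norm_eq_abs]; exact hx i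
    _ = d * δ ^ 2 := by simp

theorem exists_nat_le_abs_sub_le_half {x : ℝ} {n : ℕ} (hx0 : 0 ≤ x) (hxn : x ≤ n) :
    ∃ k ≤ n, |x - k| ≤ 1 / 2 := by
  refine ⟨⌊x + 1 / 2⌋₊, ?_, abs_le.mpr ⟨?_, ?_⟩⟩
  · exact Nat.lt_succ_iff.mp <| (Nat.floor_lt (by positivity)).mpr (by push_cast; linarith)
  · linarith [Nat.floor_le (show 0 ≤ x + 1 / 2 by positivity)]
  · linarith [Nat.lt_floor_add_one (x + 1 / 2)]

noncomputable def cubeGrid (d n : ℕ) : Finset (EuclideanSpace ℝ (Fin d)) :=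
  univ.image fun c : Fin d → Fin (n + 1) => WithLp.toLp 2 fun i => -1 + 2 * (c i : ℝ) / n

theorem card_cubeGrid_le (d n : ℕ) : #(cubeGrid d n) ≤ (n + 1) ^ d :=
  card_image_le.trans (by simp)

theorem exists_mem_cubeGrid_norm_sub_le {d n : ℕ} (hn : 0 < n) {p : EuclideanSpace ℝ (Fin d)}
    (hp : ∀ i, |p i| ≤ 1) : ∃ g ∈ cubeGrid d n, ‖p - g‖ ≤ √d / n := by
  have hn' : (0 : ℝ) < n := Nat.cast_pos.mpr hn
  have hround : ∀ i, ∃ k ≤ n, |(p i + 1) * n / 2 - k| ≤ 1 / 2 := fun i => by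
    obtain ⟨hp₁, hp₂⟩ := abs_le.mp (hp i)
    exact exists_nat_le_abs_sub_le_half
      (div_nonneg (mul_nonneg (by linarith) hn'.le) zero_le_two) (by nlinarith)
  choose k hkn hk using hround
  refine ⟨_, mem_image_of_mem _ (mem_univ fun i => (⟨k i, Nat.lt_succ_of_le (hkn i)⟩ : Fin (n + 1))),
    ?_⟩
  rw [div_eq_mul_one_div]
  refine EuclideanSpace.norm_le_sqrt_mul_of_forall_abs_le (by positivity) fun i => ?_
  have hcoord : p i - (-1 + 2 * (k i : ℝ) / n) = 2 / n * ((p i + 1) * n / 2 - k i) := by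
    field_simp
    ring
  calc |p i - (-1 + 2 * (k i : ℝ) / n)| = 2 / n * |(p i + 1) * n / 2 - k i| := by
        rw [hcoord, abs_mul, abs_of_pos (by positivity)]
    _ ≤ 2 / n * (1 / 2) := by gcongr; exact hk i
    _ = 1 / n := by ring

noncomputable def sphereGrid (d n : ℕ) (R : ℝ) : Finset (EuclideanSpace ℝ (Fin d)) :=
  (cubeGrid d n).image fun g : EuclideanSpace ℝ (Fin d) => R • normalize g

theorem card_sphereGrid_le (d n : ℕ) (R : ℝ) : #(sphereGrid d n R) ≤ (n + 1) ^ d :=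
  card_image_le.trans (card_cubeGrid_le d n)

theorem convexHull_sphereGrid_subset_closedBall (d n : ℕ) {R : ℝ} (hR : 0 ≤ R) :
    convexHull ℝ (sphereGrid d n R : Set (EuclideanSpace ℝ (Fin d))) ⊆ closedBall 0 R := by
  refine convexHull_min ?_ (convex_closedBall 0 R)
  intro v hv
  obtain ⟨g, -, rfl⟩ := mem_image.mp hv
  rw [mem_closedBall_zero_iff, norm_smul, Real.norm_of_nonneg hR]
  rcases eq_or_ne g 0 with rfl | hg
  · simpa using hR
  · rw [norm_normalize hg, mul_one]

theorem closedBall_one_subset_convexHull_sphereGrid {d n : ℕ} [NeZero d] (hn : 0 < n) {ε : ℝ}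
    (hε : ε < 1 / 3) (hnε : 4 * d ≤ 3 * ε * n ^ 2) :
    closedBall 0 1 ⊆ convexHull ℝ (sphereGrid d n (1 + 3 * ε) : Set (EuclideanSpace ℝ (Fin d))) := by
  refine closedBall_subset_convexHull_of_forall_le_inner fun u hu => ?_
  obtain ⟨g, hg, hug⟩ := exists_mem_cubeGrid_norm_sub_le hn (p := u) fun i => by
    simpa [hu] using PiLp.norm_apply_le u i
  have hn' : (0 : ℝ) < n := Nat.cast_pos.mpr hn
  have hclose : ‖u - normalize g‖ ^ 2 ≤ 3 * ε := calc
    _ ≤ (2 * (√d / n)) ^ 2 := by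
      gcongr; exact (norm_sub_normalize_le hu).trans (by gcongr)
    _ = 4 * d / n ^ 2 := by rw [mul_pow, div_pow, Real.sq_sqrt (Nat.cast_nonneg d)]; ring
    _ ≤ 3 * ε := by rw [div_le_iff₀ (by positivity)]; linarith
  have hg0 : g ≠ 0 := by rintro rfl; simp [hu] at hclose; linarith
  exact ⟨_, mem_image_of_mem _ hg,
    one_le_inner_smul_of_norm_sub_sq_le hu (norm_normalize hg0) hclose hε.le⟩

theorem exists_nat_four_le_mul_sq_and_add_one_pow_three_le {ε : ℝ} (hε0 : 0 < ε) (hε : ε ≤ 1 / 4) :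
    ∃ n : ℕ, 0 < n ∧ 4 ≤ ε * n ^ 2 ∧ ((n : ℝ) + 1) ^ 3 ≤ 27 * ε⁻¹ ^ 2 := by
  set s := √ε
  have hs0 : 0 < s := Real.sqrt_pos.mpr hε0
  have hs2 : s ^ 2 = ε := Real.sq_sqrt hε0.le
  have hs : s ≤ 1 / 2 := by nlinarith
  set n := ⌈2 / s⌉₊
  have hn_ge : 2 ≤ s * n := by
    have := Nat.le_ceil (2 / s)
    rwa [div_le_iff₀' hs0] at this
  have hn_lt : s * (n + 1) ≤ 3 := by
    have h := mul_lt_mul_of_pos_left (Nat.ceil_lt_add_one (by positivity : 0 ≤ 2 / s)) hs0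
    rw [mul_add, mul_div_cancel₀ _ hs0.ne'] at h
    linarith
  refine ⟨n, Nat.ceil_pos.mpr (by positivity), by nlinarith, ?_⟩
  rw [← hs2, inv_pow, ← pow_mul, ← div_eq_mul_inv, le_div_iff₀ (by positivity)]
  calc ((n : ℝ) + 1) ^ 3 * s ^ (2 * 2) ≤ ((n : ℝ) + 1) ^ 3 * s ^ 3 := by
        exact mul_le_mul_of_nonneg_left
          (pow_le_pow_of_le_one hs0.le (by linarith) (by norm_num)) (by positivity)
    _ = (s * (n + 1)) ^ 3 := by ring
    _ ≤ 3 ^ 3 := by gcongr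
    _ = 27 := by norm_num

/-- For every `0 < ε ≤ 1/5` there exists a convex polytope `D` in `ℝ³`
with `O(ε⁻²)` vertices such that the closed unit ball `B₁(0) ⊆ D ⊆ B_{1+4ε}(0)`. -/
theorem stmt_0 :
    ∃ C : ℝ, 0 < C ∧
      ∀ ε : ℝ, 0 < ε → ε ≤ 1/5 →
        ∃ V : Finset (EuclideanSpace ℝ (Fin 3)),
          (V.card : ℝ) ≤ C * ε⁻¹ ^ 2 ∧
          Metric.closedBall (0 : EuclideanSpace ℝ (Fin 3)) 1 ⊆ convexHull ℝ (V : Set (EuclideanSpace ℝ (Fin 3))) ∧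
          convexHull ℝ (V : Set (EuclideanSpace ℝ (Fin 3))) ⊆
            Metric.closedBall (0 : EuclideanSpace ℝ (Fin 3)) (1 + 4 * ε) := by
  refine ⟨27, by norm_num, fun ε hε0 hε => ?_⟩
  obtain ⟨n, hn, hnε, hcard⟩ :=
    exists_nat_four_le_mul_sq_and_add_one_pow_three_le hε0 (by linarith)
  refine ⟨sphereGrid 3 n (1 + 3 * ε), ?_,
    closedBall_one_subset_convexHull_sphereGrid hn (by linarith) (by push_cast; linarith), ?_⟩
  · calc (#(sphereGrid 3 n (1 + 3 * ε)) : ℝ) ≤ ((n : ℝ) + 1) ^ 3 := by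
          exact_mod_cast card_sphereGrid_le 3 n _
      _ ≤ 27 * ε⁻¹ ^ 2 := hcard
  · exact (convexHull_sphereGrid_subset_closedBall 3 n (by linarith)).trans
      (closedBall_subset_closedBall (by linarith))
end

section
/- Let P, Q be polygonal curves parametrized over [0,1] and Δ ≥ 0. The Fréchet distance d_F(P,Q) is at most Δ if and only if there exists a path from (0,0) to (1,1) inside the Δ-free space {(x,y) ∈ [0,1]² : ‖P(x) − Q(y)‖ ≤ Δ} that is monotone nondecreasing in both coordinates. -/
/-!
A monotone path in the free space from `(0, 0)` to `(1, 1)` is itself an admissible pair of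
reparametrizations. Conversely, the infimum defining `frechetDist` is not known to be attained,
so one takes pairs `(f, g)` with error below `Δ + 1/(k+1)` and reparametrizes them through a
monotone right inverse of `(f + g) / 2`, so that the coordinates sum to `2u`. These normalized
paths are 2-Lipschitz and form a compact set of functions (Tychonoff), and since `P` and `Q` are
continuous the free spaces are closed; a common element of the nested nonempty compact sets so
obtained is a monotone path in the `Δ`-free space.
-/

open Set

/-- The continuous Fréchet distance between two curves parametrized over `[0,1]`:
the infimum over nondecreasing surjective reparametrizations `f, g` of `[0,1]`
of the maximal pointwise distance. -/
noncomputable def frechetDist {E : Type*} [SeminormedAddCommGroup E] (P Q : ℝ → E) : ℝ :=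
  sInf {r : ℝ | ∃ f g : ℝ → ℝ,
    MonotoneOn f (Icc 0 1) ∧ MonotoneOn g (Icc 0 1) ∧
    f '' Icc 0 1 = Icc 0 1 ∧ g '' Icc 0 1 = Icc 0 1 ∧
    ∀ t ∈ Icc (0:ℝ) 1, ‖P (f t) - Q (g t)‖ ≤ r}

/-- The subcurve `P[s,t]`, reparametrized over `[0,1]`. -/
def subcurve {E : Type*} (P : ℝ → E) (s t : ℝ) : ℝ → E := fun u => P (s + u * (t - s))

/-- The `Δ`-coverage of a curve `Q` on `P`: the union of all parameter intervals `[s,t] ⊆ [0,1]`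
such that the subcurve `P[s,t]` has Fréchet distance at most `Δ` to `Q`. -/
def Cov {E : Type*} [SeminormedAddCommGroup E] (P Q : ℝ → E) (Δ : ℝ) : Set ℝ :=
  ⋃ (s : ℝ) (t : ℝ) (_ : 0 ≤ s) (_ : s ≤ t) (_ : t ≤ 1)
    (_ : frechetDist (subcurve P s t) Q ≤ Δ), Icc s t

/-- `P` is a polygonal curve of complexity (number of vertices) at most `n`. -/
def IsPolygonal {E : Type*} [SeminormedAddCommGroup E] [NormedSpace ℝ E]
    (P : ℝ → E) (n : ℕ) : Prop :=
  ∃ m : ℕ, m + 1 ≤ n ∧ ∃ t : Fin (m + 1) → ℝ,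
    t 0 = 0 ∧ t (Fin.last m) = 1 ∧ Monotone t ∧
    ∀ i : Fin m, ∀ u ∈ Icc (t i.castSucc) (t i.succ),
      P u = P (t i.castSucc) +
        ((u - t i.castSucc) / (t i.succ - t i.castSucc)) • (P (t i.succ) - P (t i.castSucc))

/-- The `Δ`-free space of `S` and `P` (the first coordinate is the parameter of `P`). -/
def freeSpace {E : Type*} [SeminormedAddCommGroup E] (S P : ℝ → E) (Δ : ℝ) : Set (ℝ × ℝ) :=
  {p : ℝ × ℝ | p.1 ∈ Icc (0:ℝ) 1 ∧ p.2 ∈ Icc (0:ℝ) 1 ∧ ‖P p.1 - S p.2‖ ≤ Δ}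

/-- A path inside `F` from `p` to `q` that is monotone nondecreasing in both coordinates. -/
def IsMonotonePathIn (F : Set (ℝ × ℝ)) (p q : ℝ × ℝ) : Prop :=
  ∃ γ : ℝ → ℝ × ℝ, ContinuousOn γ (Icc 0 1) ∧ γ 0 = p ∧ γ 1 = q ∧
    MonotoneOn (fun u => (γ u).1) (Icc 0 1) ∧ MonotoneOn (fun u => (γ u).2) (Icc 0 1) ∧
    ∀ u ∈ Icc (0:ℝ) 1, γ u ∈ F

lemma MonotoneOn.continuousOn_of_image_Icc_eq {f : ℝ → ℝ} {a b c d : ℝ}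
    (hf : MonotoneOn f (Icc a b)) (himg : f '' Icc a b = Icc c d) :
    ContinuousOn f (Icc a b) := by
  let g : Icc a b → Icc c d := fun x => ⟨f x, himg ▸ mem_image_of_mem f x.2⟩
  have hg : Continuous g := by
    refine Monotone.continuous_of_surjective (fun x y hxy => hf x.2 y.2 hxy) ?_
    rintro ⟨y, hy⟩
    obtain ⟨x, hx, rfl⟩ := himg.symm ▸ hy
    exact ⟨⟨x, hx⟩, rfl⟩
  exact continuousOn_iff_continuous_domRestrict.2 (continuous_subtype_val.comp hg)

lemma MonotoneOn.apply_eq_of_image_Icc_eq {f : ℝ → ℝ} {a b c d : ℝ} (hab : a ≤ b)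
    (hf : MonotoneOn f (Icc a b)) (himg : f '' Icc a b = Icc c d) : f a = c ∧ f b = d := by
  have hfa : f a ∈ Icc c d := himg ▸ mem_image_of_mem f (left_mem_Icc.2 hab)
  have hcd : c ≤ d := hfa.1.trans hfa.2
  exact ⟨(himg ▸ hf.map_isLeast (isLeast_Icc hab)).unique (isLeast_Icc hcd),
    (himg ▸ hf.map_isGreatest (isGreatest_Icc hab)).unique (isGreatest_Icc hcd)⟩

lemma image_Icc_eq_of_continuousOn {f : ℝ → ℝ} {a b c d : ℝ} (hab : a ≤ b)
    (hf : ContinuousOn f (Icc a b)) (ha : f a = c) (hb : f b = d)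
    (hmaps : MapsTo f (Icc a b) (Icc c d)) : f '' Icc a b = Icc c d := by
  subst ha hb
  exact hmaps.image_subset.antisymm (intermediate_value_Icc hab hf)

lemma ContinuousOn.exists_monotoneOn_rightInvOn {s : ℝ → ℝ} {a b : ℝ} (hab : a ≤ b)
    (hs : ContinuousOn s (Icc a b)) :
    ∃ h : ℝ → ℝ, MonotoneOn h (Icc (s a) (s b)) ∧ MapsTo h (Icc (s a) (s b)) (Icc a b) ∧
      ∀ y ∈ Icc (s a) (s b), s (h y) = y := by
  let A : ℝ → Set ℝ := fun y => Icc a b ∩ s ⁻¹' Ici y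
  have hA_closed : ∀ y, IsClosed (A y) := fun y =>
    hs.preimage_isClosed_of_isClosed isClosed_Icc isClosed_Ici
  have hA_bdd : ∀ y, BddBelow (A y) := fun y => ⟨a, fun v hv => hv.1.1⟩
  have hb_mem : ∀ y ∈ Icc (s a) (s b), b ∈ A y := fun y hy => ⟨right_mem_Icc.2 hab, hy.2⟩
  have hinf_mem : ∀ y ∈ Icc (s a) (s b), sInf (A y) ∈ A y := fun y hy =>
    (hA_closed y).csInf_mem ⟨b, hb_mem y hy⟩ (hA_bdd y)
  refine ⟨fun y => sInf (A y), fun y hy y' hy' hyy' => ?_, fun y hy => (hinf_mem y hy).1,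
    fun y hy => ?_⟩
  · exact csInf_le_csInf (hA_bdd y) ⟨b, hb_mem y' hy'⟩
      fun v hv => ⟨hv.1, hyy'.trans hv.2⟩
  · -- the least `v` with `y ≤ s v` has `s v = y`, by the intermediate value theorem on `[a, v]`
    obtain ⟨hv, hyv⟩ := hinf_mem y hy
    obtain ⟨w, hw, hsw⟩ := intermediate_value_Icc hv.1 (hs.mono (Icc_subset_Icc le_rfl hv.2))
      ⟨hy.1, hyv⟩
    have : sInf (A y) ≤ w := csInf_le (hA_bdd y) ⟨⟨hw.1, hw.2.trans hv.2⟩, hsw.ge⟩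
    rwa [le_antisymm hw.2 this] at hsw

lemma MonotoneOn.lipschitzOnWith_of_monotoneOn_sub {f : ℝ → ℝ} {s : Set ℝ} {K : NNReal}
    (hf : MonotoneOn f s) (hKf : MonotoneOn (fun x => K * x - f x) s) :
    LipschitzOnWith K f s := by
  refine LipschitzOnWith.of_dist_le_mul fun x hx y hy => ?_
  wlog hxy : y ≤ x generalizing x y
  · rw [dist_comm, dist_comm x]; exact this y hy x hx (le_of_not_ge hxy)
  have h₁ := hf hy hx hxy
  have h₂ := hKf hy hx hxy
  rw [Real.dist_eq, Real.dist_eq, abs_of_nonneg (sub_nonneg.2 h₁),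
    abs_of_nonneg (sub_nonneg.2 hxy)]
  simp only at h₂
  linarith

/-- The normalization `x + y = 2u` makes both coordinates 2-Lipschitz; asking for the box
condition at every `t : ℝ` makes the set compact for the product topology. -/
def normalizedMonotonePaths : Set (ℝ → ℝ × ℝ) :=
  {γ | (∀ t, γ t ∈ Icc (0:ℝ) 1 ×ˢ Icc (0:ℝ) 1) ∧
    MonotoneOn (fun u => (γ u).1) (Icc 0 1) ∧ MonotoneOn (fun u => (γ u).2) (Icc 0 1) ∧
    ∀ u ∈ Icc (0:ℝ) 1, (γ u).1 + (γ u).2 = 2 * u}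

lemma isCompact_normalizedMonotonePaths : IsCompact normalizedMonotonePaths := by
  have hbox : IsCompact (univ.pi fun _ : ℝ => Icc (0:ℝ) 1 ×ˢ Icc (0:ℝ) 1) :=
    isCompact_univ_pi fun _ => isCompact_Icc.prod isCompact_Icc
  refine hbox.of_isClosed_subset ?_ fun γ hγ t _ => hγ.1 t
  simp only [normalizedMonotonePaths, ofPred_and, ofPred_forall]
  refine (isClosed_iInter fun t => ?_).inter <| (isClosed_monotoneOn.preimage ?_).inter <|
    (isClosed_monotoneOn.preimage ?_).inter <|
    isClosed_iInter fun u => isClosed_iInter fun _ => ?_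
  · exact (isClosed_Icc.prod isClosed_Icc).preimage (continuous_apply t)
  all_goals first | fun_prop | exact isClosed_eq (by fun_prop) (by fun_prop)

lemma continuousOn_of_mem_normalizedMonotonePaths {γ : ℝ → ℝ × ℝ}
    (hγ : γ ∈ normalizedMonotonePaths) : ContinuousOn γ (Icc 0 1) := by
  obtain ⟨-, h₁, h₂, hsum⟩ := hγ
  have hc₁ : ContinuousOn (fun u => (γ u).1) (Icc 0 1) :=
    (h₁.lipschitzOnWith_of_monotoneOn_sub (K := 2) <| h₂.congr fun u hu => by
      push_cast; linarith [hsum u hu]).continuousOn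
  have hc₂ : ContinuousOn (fun u => (γ u).2) (Icc 0 1) :=
    (h₂.lipschitzOnWith_of_monotoneOn_sub (K := 2) <| h₁.congr fun u hu => by
      push_cast; linarith [hsum u hu]).continuousOn
  exact hc₁.prodMk hc₂

lemma exists_mem_normalizedMonotonePaths {f g : ℝ → ℝ} {F : Set (ℝ × ℝ)}
    (hf : MonotoneOn f (Icc 0 1)) (hg : MonotoneOn g (Icc 0 1))
    (hf_img : f '' Icc 0 1 = Icc 0 1) (hg_img : g '' Icc 0 1 = Icc 0 1)
    (hF : ∀ t ∈ Icc (0:ℝ) 1, (f t, g t) ∈ F) :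
    ∃ γ ∈ normalizedMonotonePaths, ∀ u ∈ Icc (0:ℝ) 1, γ u ∈ F := by
  obtain ⟨hf₀, hf₁⟩ := hf.apply_eq_of_image_Icc_eq zero_le_one hf_img
  obtain ⟨hg₀, hg₁⟩ := hg.apply_eq_of_image_Icc_eq zero_le_one hg_img
  have hf_maps : MapsTo f (Icc 0 1) (Icc 0 1) := (mapsTo_image f _).mono_right hf_img.subset
  have hg_maps : MapsTo g (Icc 0 1) (Icc 0 1) := (mapsTo_image g _).mono_right hg_img.subset
  set s : ℝ → ℝ := fun t => (f t + g t) / 2 with hs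
  have hs_cont : ContinuousOn s (Icc 0 1) :=
    ((hf.continuousOn_of_image_Icc_eq hf_img).add
      (hg.continuousOn_of_image_Icc_eq hg_img)).div_const 2
  obtain ⟨h, hh_mono, hh_maps, hsh⟩ := hs_cont.exists_monotoneOn_rightInvOn zero_le_one
  have hs_ends : Icc (s 0) (s 1) = Icc 0 1 := by simp [hs, hf₀, hf₁, hg₀, hg₁]
  rw [hs_ends] at hh_mono hh_maps hsh
  set q : ℝ → ℝ := fun u => h (projIcc (0:ℝ) 1 zero_le_one u) with hq
  have hq_maps : ∀ u, q u ∈ Icc (0:ℝ) 1 := fun u => hh_maps (projIcc 0 1 zero_le_one u).2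
  have hq_mono : MonotoneOn q (Icc 0 1) :=
    hh_mono.comp ((monotone_projIcc zero_le_one).monotoneOn _) fun u _ => Subtype.property _
  refine ⟨fun u => (f (q u), g (q u)), ⟨fun u => ⟨hf_maps (hq_maps u), hg_maps (hq_maps u)⟩,
    hf.comp hq_mono fun u _ => hq_maps u, hg.comp hq_mono fun u _ => hq_maps u, fun u hu => ?_⟩,
    fun u _ => hF _ (hq_maps u)⟩
  have := hsh u hu
  simp only [hq, hs, projIcc_of_mem zero_le_one hu] at this ⊢
  linarith

lemma isMonotonePathIn_of_mem_normalizedMonotonePaths {F : Set (ℝ × ℝ)} {γ : ℝ → ℝ × ℝ}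
    (hγ : γ ∈ normalizedMonotonePaths) (hF : ∀ u ∈ Icc (0:ℝ) 1, γ u ∈ F) :
    IsMonotonePathIn F (0, 0) (1, 1) := by
  obtain ⟨hbox, h₁, h₂, hsum⟩ := hγ
  have h0 := hsum 0 (left_mem_Icc.2 zero_le_one)
  have h1 := hsum 1 (right_mem_Icc.2 zero_le_one)
  obtain ⟨⟨h0₁, -⟩, ⟨h0₂, -⟩⟩ := hbox 0
  obtain ⟨⟨-, h1₁⟩, ⟨-, h1₂⟩⟩ := hbox 1
  exact ⟨γ, continuousOn_of_mem_normalizedMonotonePaths ⟨hbox, h₁, h₂, hsum⟩,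
    Prod.ext (by linarith) (by linarith), Prod.ext (by linarith) (by linarith), h₁, h₂, hF⟩

section FreeSpace

variable {E : Type*} [SeminormedAddCommGroup E] {S P : ℝ → E}

lemma freeSpace_mono {Δ Δ' : ℝ} (h : Δ ≤ Δ') : freeSpace S P Δ ⊆ freeSpace S P Δ' :=
  fun _ ⟨hx, hy, hd⟩ => ⟨hx, hy, hd.trans h⟩

lemma iInter_freeSpace_add_one_div (Δ : ℝ) :
    ⋂ k : ℕ, freeSpace S P (Δ + 1 / (k + 1)) = freeSpace S P Δ := by
  refine (subset_iInter fun k => freeSpace_mono (le_add_of_nonneg_right (by positivity))).antisymm'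
    fun p hp => ?_
  obtain ⟨hx, hy, -⟩ := mem_iInter.1 hp 0
  refine ⟨hx, hy, ?_⟩
  simpa using ge_of_tendsto' (tendsto_const_nhds.add tendsto_one_div_add_atTop_nhds_zero_nat)
    fun k => (mem_iInter.1 hp k).2.2

lemma isClosed_freeSpace (hS : ContinuousOn S (Icc 0 1)) (hP : ContinuousOn P (Icc 0 1))
    (Δ : ℝ) : IsClosed (freeSpace S P Δ) := by
  have hdist : ContinuousOn (fun p : ℝ × ℝ => ‖P p.1 - S p.2‖) (Icc 0 1 ×ˢ Icc 0 1) :=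
    ((hP.comp continuousOn_fst fun _ hp => hp.1).sub
      (hS.comp continuousOn_snd fun _ hp => hp.2)).norm
  convert hdist.preimage_isClosed_of_isClosed (isClosed_Icc.prod isClosed_Icc)
    (isClosed_Iic (a := Δ)) using 1
  ext p
  simp only [freeSpace, mem_ofPred_eq, mem_inter_iff, mem_prod, mem_preimage, mem_Iic, and_assoc]

end FreeSpace

section Frechet

variable {E : Type*} [SeminormedAddCommGroup E] {P Q : ℝ → E}

lemma frechetDist_le_of_reparam {f g : ℝ → ℝ} {r : ℝ}
    (hf : MonotoneOn f (Icc 0 1)) (hg : MonotoneOn g (Icc 0 1))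
    (hf_img : f '' Icc 0 1 = Icc 0 1) (hg_img : g '' Icc 0 1 = Icc 0 1)
    (hb : ∀ t ∈ Icc (0:ℝ) 1, ‖P (f t) - Q (g t)‖ ≤ r) : frechetDist P Q ≤ r := by
  refine csInf_le ⟨0, ?_⟩ ⟨f, g, hf, hg, hf_img, hg_img, hb⟩
  rintro _ ⟨_, _, _, _, _, _, hb'⟩
  exact (norm_nonneg _).trans (hb' 0 (left_mem_Icc.2 zero_le_one))

lemma exists_reparam_of_frechetDist_lt (hP : ContinuousOn P (Icc 0 1))
    (hQ : ContinuousOn Q (Icc 0 1)) {r : ℝ} (h : frechetDist P Q < r) :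
    ∃ f g : ℝ → ℝ, MonotoneOn f (Icc 0 1) ∧ MonotoneOn g (Icc 0 1) ∧
      f '' Icc 0 1 = Icc 0 1 ∧ g '' Icc 0 1 = Icc 0 1 ∧
      ∀ t ∈ Icc (0:ℝ) 1, (f t, g t) ∈ freeSpace Q P r := by
  unfold frechetDist at h
  -- the identity pair shows that the infimum is not taken over the empty set
  obtain ⟨x, -, hmax⟩ :=
    isCompact_Icc.exists_isMaxOn (nonempty_Icc.2 zero_le_one) (hP.sub hQ).norm
  obtain ⟨r', ⟨f, g, hf, hg, hf_img, hg_img, hb⟩, hr'⟩ := exists_lt_of_csInf_lt (by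
    exact ⟨_, id, id, monotoneOn_id, monotoneOn_id, image_id _, image_id _, fun _ hu => hmax hu⟩) h
  refine ⟨f, g, hf, hg, hf_img, hg_img, fun t ht => ⟨?_, ?_, (hb t ht).trans hr'.le⟩⟩
  · exact hf_img ▸ mem_image_of_mem f ht
  · exact hg_img ▸ mem_image_of_mem g ht

theorem frechetDist_le_of_isMonotonePathIn_freeSpace {Δ : ℝ}
    (h : IsMonotonePathIn (freeSpace Q P Δ) (0, 0) (1, 1)) : frechetDist P Q ≤ Δ := by
  obtain ⟨γ, hγ, hγ₀, hγ₁, h₁, h₂, hF⟩ := h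
  refine frechetDist_le_of_reparam h₁ h₂ ?_ ?_ fun u hu => (hF u hu).2.2
  · exact image_Icc_eq_of_continuousOn zero_le_one (continuous_fst.comp_continuousOn hγ)
      (by simp [hγ₀]) (by simp [hγ₁]) fun u hu => (hF u hu).1
  · exact image_Icc_eq_of_continuousOn zero_le_one (continuous_snd.comp_continuousOn hγ)
      (by simp [hγ₀]) (by simp [hγ₁]) fun u hu => (hF u hu).2.1

theorem isMonotonePathIn_freeSpace_of_frechetDist_le (hP : ContinuousOn P (Icc 0 1))
    (hQ : ContinuousOn Q (Icc 0 1)) {Δ : ℝ} (h : frechetDist P Q ≤ Δ) :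
    IsMonotonePathIn (freeSpace Q P Δ) (0, 0) (1, 1) := by
  set K : ℕ → Set (ℝ → ℝ × ℝ) := fun k => normalizedMonotonePaths ∩
    {γ | ∀ u ∈ Icc (0:ℝ) 1, γ u ∈ freeSpace Q P (Δ + 1 / (k + 1))}
  have hK_closed : ∀ k, IsClosed (K k) := fun k =>
    isCompact_normalizedMonotonePaths.isClosed.inter <| by
      simp only [ofPred_forall]
      exact isClosed_biInter fun u _ =>
        (isClosed_freeSpace hQ hP _).preimage (continuous_apply u)
  have hK_anti : ∀ k, K (k + 1) ⊆ K k := fun k =>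
    inter_subset_inter_right _ fun γ hγ u hu =>
      freeSpace_mono (add_le_add_right (Nat.one_div_le_one_div k.le_succ) Δ) (hγ u hu)
  have hK_nonempty : ∀ k, (K k).Nonempty := by
    intro k
    obtain ⟨f, g, hf, hg, hf_img, hg_img, hfg⟩ := exists_reparam_of_frechetDist_lt hP hQ
      (h.trans_lt (lt_add_of_pos_right Δ Nat.one_div_pos_of_nat))
    exact exists_mem_normalizedMonotonePaths hf hg hf_img hg_img hfg
  obtain ⟨γ, hγ⟩ := IsCompact.nonempty_iInter_of_sequence_nonempty_isCompact_isClosed K hK_anti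
    hK_nonempty (isCompact_normalizedMonotonePaths.of_isClosed_subset (hK_closed 0)
      inter_subset_left) hK_closed
  rw [mem_iInter] at hγ
  refine isMonotonePathIn_of_mem_normalizedMonotonePaths (hγ 0).1 fun u hu => ?_
  rw [← iInter_freeSpace_add_one_div]
  exact mem_iInter.2 fun k => (hγ k).2 u hu

end Frechet

lemma IsPolygonal.continuousOn {E : Type*} [SeminormedAddCommGroup E] [NormedSpace ℝ E]
    {P : ℝ → E} {n : ℕ} (hP : IsPolygonal P n) : ContinuousOn P (Icc 0 1) := by
  obtain ⟨m, -, t, ht₀, ht₁, ht_mono, hseg⟩ := hP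
  suffices H : ∀ i : Fin (m + 1), ContinuousOn P (Icc (t 0) (t i)) by
    simpa [ht₀, ht₁] using H (Fin.last m)
  intro i
  induction i using Fin.induction with
  | zero => simp
  | succ i ih =>
    rw [← Icc_union_Icc_eq_Icc (ht_mono (Fin.zero_le _)) (ht_mono (Fin.castSucc_le_succ i))]
    exact ih.union_of_isClosed ((Continuous.continuousOn (by fun_prop)).congr (hseg i))
      isClosed_Icc isClosed_Icc

theorem stmt_4_general {E : Type*} [SeminormedAddCommGroup E] [NormedSpace ℝ E]
    (P Q : ℝ → E) (n m : ℕ) (hP : IsPolygonal P n) (hQ : IsPolygonal Q m)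
    (Δ : ℝ) :
    frechetDist P Q ≤ Δ ↔ IsMonotonePathIn (freeSpace Q P Δ) (0, 0) (1, 1) :=
  ⟨isMonotonePathIn_freeSpace_of_frechetDist_le hP.continuousOn hQ.continuousOn,
    frechetDist_le_of_isMonotonePathIn_freeSpace⟩

/-- For polygonal curves `P, Q` over `[0,1]` and `Δ ≥ 0`, the Fréchet distance
`d_F(P,Q)` is at most `Δ` iff there is a path from `(0,0)` to `(1,1)` inside the `Δ`-free
space `{(x,y) ∈ [0,1]² : ‖P(x) − Q(y)‖ ≤ Δ}` that is monotone nondecreasing in both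
coordinates. -/
theorem stmt_4 {E : Type*} [SeminormedAddCommGroup E] [NormedSpace ℝ E]
    (P Q : ℝ → E) (n m : ℕ) (hP : IsPolygonal P n) (hQ : IsPolygonal Q m)
    (Δ : ℝ) (hΔ : 0 ≤ Δ) :
    frechetDist P Q ≤ Δ ↔ IsMonotonePathIn (freeSpace Q P Δ) (0, 0) (1, 1) :=
  stmt_4_general P Q n m hP hQ Δ
end

section
/- Let f : 𝒫(𝒮) → ℝ be a monotone submodular function with f(∅) = 0 on a finite ground set 𝒮, and let k ≥ 1. The greedy algorithm that iteratively adds the element maximizing the marginal gain produces after k steps a set R with f(R) ≥ (1 − 1/e)·max{f(C) : C ⊆ 𝒮, |C| = k}. -/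
/-!
By submodularity, the gap `f C - f R` between a `k`-set `C` and the current greedy set `R` is
at most the sum over `x ∈ C` of the marginal gains `f (insert x R) - f R`, each of which is at
most the gain of the greedy step. Hence every greedy step shrinks the gap by a factor
`1 - 1/k`, and after `k` steps it is at most `(1 - 1/k)^k f C ≤ f C / e`.
-/

open Finset

section

variable {α : Type*}

def MonotoneWithin (𝒮 : Finset α) (f : Finset α → ℝ) : Prop :=
  ∀ A B : Finset α, A ⊆ B → B ⊆ 𝒮 → f A ≤ f B

variable [DecidableEq α]

def SubmodularWithin (𝒮 : Finset α) (f : Finset α → ℝ) : Prop :=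
  ∀ (A B : Finset α) (x : α), A ⊆ B → B ⊆ 𝒮 → x ∈ 𝒮 → x ∉ B →
    f (insert x B) - f B ≤ f (insert x A) - f A

def IsGreedyStep (𝒮 : Finset α) (f : Finset α → ℝ) (A A' : Finset α) : Prop :=
  ∃ x ∈ 𝒮, A' = insert x A ∧ ∀ y ∈ 𝒮, f (insert y A) ≤ f (insert x A)

variable {𝒮 : Finset α} {f : Finset α → ℝ}

theorem SubmodularWithin.union_sub_le_sum (hm : MonotoneWithin 𝒮 f) (hs : SubmodularWithin 𝒮 f)
    {A : Finset α} (hA : A ⊆ 𝒮) {S : Finset α} (hS : S ⊆ 𝒮) :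
    f (A ∪ S) - f A ≤ ∑ x ∈ S, (f (insert x A) - f A) := by
  induction S using Finset.induction_on with
  | empty => simp
  | @insert y S hy ih =>
    obtain ⟨hy𝒮, hS'⟩ := insert_subset_iff.mp hS
    have hgain : f (insert y (A ∪ S)) - f (A ∪ S) ≤ f (insert y A) - f A := by
      by_cases hyAS : y ∈ A ∪ S
      · rw [insert_eq_self.mpr hyAS, sub_self, sub_nonneg]
        exact hm _ _ (subset_insert _ _) (insert_subset hy𝒮 hA)
      · exact hs _ _ y subset_union_left (union_subset hA hS') hy𝒮 hyAS
    rw [union_insert, sum_insert hy]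
    linarith [ih hS']

theorem IsGreedyStep.subset {A A' : Finset α} (h : IsGreedyStep 𝒮 f A A') (hA : A ⊆ 𝒮) :
    A' ⊆ 𝒮 := by
  obtain ⟨x, hx, rfl, -⟩ := h
  exact insert_subset hx hA

theorem IsGreedyStep.sub_le_card_mul_gain (hm : MonotoneWithin 𝒮 f) (hs : SubmodularWithin 𝒮 f)
    {A A' C : Finset α} (h : IsGreedyStep 𝒮 f A A') (hA : A ⊆ 𝒮) (hC : C ⊆ 𝒮) :
    f C - f A ≤ #C * (f A' - f A) := by
  obtain ⟨x, -, rfl, hmax⟩ := h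
  calc f C - f A ≤ f (A ∪ C) - f A := by
        gcongr; exact hm _ _ subset_union_right (union_subset hA hC)
    _ ≤ ∑ y ∈ C, (f (insert y A) - f A) := hs.union_sub_le_sum hm hA hC
    _ ≤ ∑ _y ∈ C, (f (insert x A) - f A) := sum_le_sum fun y hy => by
        gcongr; exact hmax y (hC hy)
    _ = #C * (f (insert x A) - f A) := by rw [sum_const, nsmul_eq_mul]

theorem IsGreedyStep.sub_le_mul_sub (hm : MonotoneWithin 𝒮 f) (hs : SubmodularWithin 𝒮 f)
    {A A' C : Finset α} (h : IsGreedyStep 𝒮 f A A') (hA : A ⊆ 𝒮) (hC : C ⊆ 𝒮)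
    (hCpos : 0 < #C) :
    f C - f A' ≤ (1 - 1 / #C) * (f C - f A) := by
  have hCpos' : (0 : ℝ) < #C := by exact_mod_cast hCpos
  have hgain : (f C - f A) / #C ≤ f A' - f A := by
    rw [div_le_iff₀ hCpos', mul_comm]
    exact h.sub_le_card_mul_gain hm hs hA hC
  rw [one_sub_mul, one_div_mul_eq_div]
  linarith

theorem greedy_subset {R : ℕ → Finset α} (hR0 : R 0 = ∅)
    (hstep : ∀ n, IsGreedyStep 𝒮 f (R n) (R (n + 1))) (n : ℕ) : R n ⊆ 𝒮 := by
  induction n with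
  | zero => simp [hR0]
  | succ n ih => exact (hstep n).subset ih

end

theorem stmt_13_general {α : Type*} [DecidableEq α] (𝒮 : Finset α)
    (f : Finset α → ℝ)
    (hmono : ∀ A B : Finset α, A ⊆ B → B ⊆ 𝒮 → f A ≤ f B)
    (hzero : f ∅ = 0)
    (hsubmod : ∀ (A B : Finset α) (x : α), A ⊆ B → B ⊆ 𝒮 → x ∈ 𝒮 → x ∉ B →
      f (insert x B) - f B ≤ f (insert x A) - f A)
    (R : ℕ → Finset α) (hR0 : R 0 = ∅)
    (hstep : ∀ k : ℕ, ∃ x ∈ 𝒮, R (k + 1) = insert x (R k) ∧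
      ∀ y ∈ 𝒮, f (insert y (R k)) ≤ f (insert x (R k)))
    (k : ℕ) (hk : 1 ≤ k) (C : Finset α) (hC : C ⊆ 𝒮) (hCk : C.card = k) :
    (1 - 1 / Real.exp 1) * f C ≤ f (R k) := by
  subst hCk
  have hk' : (1 : ℝ) ≤ #C := by exact_mod_cast hk
  have hgap : f C - f (R #C) ≤ (1 - 1 / #C) ^ #C * (f C - f (R 0)) :=
    le_geom (u := fun n => f C - f (R n)) (sub_nonneg.mpr ((div_le_one (by positivity)).mpr hk')) _ fun n _ =>
      IsGreedyStep.sub_le_mul_sub hmono hsubmod (hstep n) (greedy_subset hR0 hstep n) hC hk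
  have hfC : 0 ≤ f C := hzero ▸ hmono ∅ C (empty_subset C) hC
  rw [hR0, hzero, sub_zero] at hgap
  calc (1 - 1 / Real.exp 1) * f C = f C - Real.exp (-1) * f C := by
        rw [Real.exp_neg, inv_eq_one_div]; ring
    _ ≤ f C - (1 - 1 / #C) ^ #C * f C := by
        gcongr; exact Real.one_sub_div_pow_le_exp_neg hk'
    _ ≤ f (R #C) := by linarith

/-- Nemhauser–Wolsey–Fisher greedy bound for monotone submodular maximization.
If `f` is monotone submodular with `f ∅ = 0` on a finite nonempty ground set `𝒮`, and `R`
is a run of the greedy algorithm that at each step adds an element of `𝒮` maximizing the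
value, then after `k` steps `f (R k) ≥ (1 − 1/e) · f C` for every `C ⊆ 𝒮` with `|C| = k`. -/
theorem stmt_13 {α : Type*} [DecidableEq α] (𝒮 : Finset α) (h𝒮 : 𝒮.Nonempty)
    (f : Finset α → ℝ)
    (hmono : ∀ A B : Finset α, A ⊆ B → B ⊆ 𝒮 → f A ≤ f B)
    (hzero : f ∅ = 0)
    (hsubmod : ∀ (A B : Finset α) (x : α), A ⊆ B → B ⊆ 𝒮 → x ∈ 𝒮 → x ∉ B →
      f (insert x B) - f B ≤ f (insert x A) - f A)
    (R : ℕ → Finset α) (hR0 : R 0 = ∅)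
    (hstep : ∀ k : ℕ, ∃ x ∈ 𝒮, R (k + 1) = insert x (R k) ∧
      ∀ y ∈ 𝒮, f (insert y (R k)) ≤ f (insert x (R k)))
    (k : ℕ) (hk : 1 ≤ k) (C : Finset α) (hC : C ⊆ 𝒮) (hCk : C.card = k) :
    (1 - 1 / Real.exp 1) * f C ≤ f (R k) :=
  stmt_13_general 𝒮 f hmono hzero hsubmod R hR0 hstep k hk C hC hCk
end

section
/- Let F ⊆ [0,1]² be convex, and for y ∈ [0,1] let l(y) = inf{x : (x,y) ∈ F} and r(y) = sup{x : (x,y) ∈ F} (defined when the horizontal slice is nonempty). Suppose s ≤ t, the slices at heights s and t are nonempty, the topmost points of F (points maximizing y) all have x-coordinate strictly less than l(s), and both l(s) and r(t) are strictly less than the x-coordinates of all bottommost points of F. Then l(t) ≤ l(s) and r(t) ≤ r(s); in particular l(s), r(t) ∈ [l(t), r(s)]. -/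
/-!
Let `b` be a bottommost and `a` a topmost point of `F`. By convexity the segment from `b` to
`(r t, t)` crosses height `s` at an abscissa between `r t` and `b.1`, hence at least `r t` since
`r t < b.1`; that point lies in the slice at `s`, so `r t ≤ r s`. Symmetrically, the segment from
`(l s, s)` to `a` crosses height `t` at an abscissa at most `l s`, so `l t ≤ l s`.
-/

open Set

/-- Leftmost `x`-coordinate of the horizontal slice of `F` at height `y`. -/
noncomputable def slL (F : Set (ℝ × ℝ)) (y : ℝ) : ℝ := sInf {x : ℝ | (x, y) ∈ F}

/-- Rightmost `x`-coordinate of the horizontal slice of `F` at height `y`. -/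
noncomputable def slR (F : Set (ℝ × ℝ)) (y : ℝ) : ℝ := sSup {x : ℝ | (x, y) ∈ F}

lemma Convex.exists_mem_of_snd_mem_uIcc {F : Set (ℝ × ℝ)} (hF : Convex ℝ F) {p q : ℝ × ℝ}
    (hp : p ∈ F) (hq : q ∈ F) {y : ℝ} (hy : y ∈ uIcc p.2 q.2) :
    ∃ x ∈ uIcc p.1 q.1, (x, y) ∈ F := by
  rw [← segment_eq_uIcc] at hy
  obtain ⟨z, hz, rfl⟩ := (image_segment ℝ (LinearMap.snd ℝ ℝ ℝ).toAffineMap p q).ge hy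
  refine ⟨z.1, ?_, hF.segment_subset hp hq hz⟩
  rw [← segment_eq_uIcc]
  exact (Prod.segment_subset p q hz).1

section Slices

variable {F : Set (ℝ × ℝ)} {y : ℝ}

lemma IsCompact.slice (hF : IsCompact F) (y : ℝ) : IsCompact {x : ℝ | (x, y) ∈ F} :=
  (Topology.IsClosedEmbedding.mk (isEmbedding_prodMkLeft y)
    (isClosedMap_prodMk_right y).isClosed_range).isCompact_preimage hF

lemma IsCompact.slL_mem (hF : IsCompact F) (hy : ∃ x, (x, y) ∈ F) : (slL F y, y) ∈ F :=
  (hF.slice y).sInf_mem hy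

lemma IsCompact.slR_mem (hF : IsCompact F) (hy : ∃ x, (x, y) ∈ F) : (slR F y, y) ∈ F :=
  (hF.slice y).sSup_mem hy

lemma IsCompact.slL_le {x : ℝ} (hF : IsCompact F) (hx : (x, y) ∈ F) : slL F y ≤ x :=
  csInf_le (hF.slice y).bddBelow hx

lemma IsCompact.le_slR {x : ℝ} (hF : IsCompact F) (hx : (x, y) ∈ F) : x ≤ slR F y :=
  le_csSup (hF.slice y).bddAbove hx

lemma IsCompact.slL_le_slR (hF : IsCompact F) (hy : ∃ x, (x, y) ∈ F) : slL F y ≤ slR F y :=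
  hF.le_slR (hF.slL_mem hy)

lemma IsCompact.exists_snd_eq_sInf (hF : IsCompact F) (hne : F.Nonempty) :
    ∃ b ∈ F, b.2 = sInf (Prod.snd '' F) ∧ ∀ p ∈ F, b.2 ≤ p.2 := by
  have hK := hF.image continuous_snd
  obtain ⟨b, hb, hb2⟩ := hK.sInf_mem (hne.image _)
  exact ⟨b, hb, hb2, fun p hp => hb2 ▸ csInf_le hK.bddBelow (mem_image_of_mem _ hp)⟩

lemma IsCompact.exists_snd_eq_sSup (hF : IsCompact F) (hne : F.Nonempty) :
    ∃ b ∈ F, b.2 = sSup (Prod.snd '' F) ∧ ∀ p ∈ F, p.2 ≤ b.2 := by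
  have hK := hF.image continuous_snd
  obtain ⟨b, hb, hb2⟩ := hK.sSup_mem (hne.image _)
  exact ⟨b, hb, hb2, fun p hp => hb2 ▸ le_csSup hK.bddAbove (mem_image_of_mem _ hp)⟩

end Slices

theorem stmt_17_general (F : Set (ℝ × ℝ))
    (hconv : Convex ℝ F) (hcomp : IsCompact F)
    (s t : ℝ) (hst : s ≤ t)
    (hs : ∃ x, (x, s) ∈ F) (ht : ∃ x, (x, t) ∈ F)
    (htop : ∀ p ∈ F, p.2 = sSup (Prod.snd '' F) → p.1 < slL F s)
    (hbot : ∀ p ∈ F, p.2 = sInf (Prod.snd '' F) → slL F s < p.1 ∧ slR F t < p.1) :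
    slL F t ≤ slL F s ∧ slR F t ≤ slR F s ∧
      slL F s ∈ Icc (slL F t) (slR F s) ∧ slR F t ∈ Icc (slL F t) (slR F s) := by
  have hls := hcomp.slL_mem hs
  have hrt := hcomp.slR_mem ht
  obtain ⟨b, hb, hb2, hb_min⟩ := hcomp.exists_snd_eq_sInf ⟨_, hls⟩
  obtain ⟨a, ha, ha2, ha_max⟩ := hcomp.exists_snd_eq_sSup ⟨_, hls⟩
  have hr : slR F t ≤ slR F s := by
    obtain ⟨x, hx, hxF⟩ := hconv.exists_mem_of_snd_mem_uIcc hb hrt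
      (Icc_subset_uIcc ⟨hb_min _ hls, hst⟩)
    have : min b.1 (slR F t) = slR F t := min_eq_right (hbot b hb hb2).2.le
    exact (this ▸ hx.1).trans (hcomp.le_slR hxF)
  have hl : slL F t ≤ slL F s := by
    obtain ⟨x, hx, hxF⟩ := hconv.exists_mem_of_snd_mem_uIcc hls ha
      (Icc_subset_uIcc ⟨hst, ha_max _ hrt⟩)
    have : max (slL F s) a.1 = slL F s := max_eq_left (htop a ha ha2).le
    exact (hcomp.slL_le hxF).trans (this ▸ hx.2)
  exact ⟨hl, hr, ⟨hl, hcomp.slL_le_slR hs⟩, ⟨hcomp.slL_le_slR ht, hr⟩⟩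

/-- Reversal lemma for a "bad" convex cell. If `F ⊆ [0,1]²` is a nonempty
compact convex set, `s ≤ t` with nonempty slices, all topmost points of `F` lie strictly
left of `l(s)`, and both `l(s)` and `r(t)` lie strictly left of all bottommost points,
then `l(t) ≤ l(s)` and `r(t) ≤ r(s)`; in particular `l(s), r(t) ∈ [l(t), r(s)]`. -/
theorem stmt_17 (F : Set (ℝ × ℝ)) (hF : F ⊆ Icc (0:ℝ) 1 ×ˢ Icc (0:ℝ) 1)
    (hconv : Convex ℝ F) (hcomp : IsCompact F) (hne : F.Nonempty)
    (s t : ℝ) (hst : s ≤ t)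
    (hs : ∃ x, (x, s) ∈ F) (ht : ∃ x, (x, t) ∈ F)
    (htop : ∀ p ∈ F, p.2 = sSup (Prod.snd '' F) → p.1 < slL F s)
    (hbot : ∀ p ∈ F, p.2 = sInf (Prod.snd '' F) → slL F s < p.1 ∧ slR F t < p.1) :
    slL F t ≤ slL F s ∧ slR F t ≤ slR F s ∧
      slL F s ∈ Icc (slL F t) (slR F s) ∧ slR F t ∈ Icc (slL F t) (slR F s) :=
  stmt_17_general F hconv hcomp s t hst hs ht htop hbot
end
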